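/- arXiv:0704.0945 — 10 statements merged into one kernel-verified Lean document; each statement's English description precedes it below -/
import Mathlib

section
/- For all integers i, j ≥ 1 and β > -2, the beta-splitting rule p(i,j) = B(i+β+1, j+β+1)/Z(i+j), where B is the Beta function and Z(n) = Σ_{k=1}^{n-1} C(n-1,k-1) B(k+β+1, n-k+β+1), satisfies the consistency equation p(i,j) = p(i+1,j) + p(i,j+1) + p(i+j,1)·p(i,j). -/
/-!
Since `Γ (s + 1) = s Γ (s)`, the Beta function satisfies `B (a + 1) b + B a (b + 1) = B a b`.
Hence `f i l = B (i + β + 2) (l + β + 1)` obeys Pascal's rule, so the binomial sums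
`∑ i ≤ m, C(m, i) f i (m - i)` do not depend on `m`. The normalizer `Z (m + 1)` is such a sum
with the term `i = m` left out, which gives `Z (n + 1) = Z n + w` with `w = B (n + β + 1) (β + 2)`,
`n = i + j`. With `x = B (i + β + 1) (j + β + 1)`, the Beta recurrence gives
`p (i + 1) j + p i (j + 1) = x / Z (n + 1)`, and consistency reduces to
`x / Z n = x / (Z n + w) + (w / (Z n + w)) (x / Z n)`.
-/

open Finset

theorem sum_range_choose_mul_succ_of_pascal {R : Type*} [NonAssocSemiring R] [IsRightCancelAdd R]
    (f : ℕ → ℕ → R) (hf : ∀ i l, f i (l + 1) = f (i + 1) (l + 1) + f i (l + 2)) (m : ℕ) :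
    ∑ i ∈ range (m + 1), ((m + 1).choose i : R) * f i (m + 1 - i) =
      ∑ i ∈ range m, (m.choose i : R) * f i (m - i) + f m 1 := by
  have split := sum_choose_succ_mul f m
  rw [sum_range_succ _ (m + 1), sum_range_succ (fun i ↦ (m.choose i : R) * f i (m + 1 - i)),
    sum_range_succ (fun i ↦ (m.choose i : R) * f (i + 1) (m - i))] at split
  simp only [Nat.choose_self, Nat.cast_one, one_mul, Nat.sub_self,
    Nat.add_sub_cancel_left] at split
  have pascal : ∀ i ∈ range m, (m.choose i : R) * f i (m - i) =
      (m.choose i : R) * f i (m + 1 - i) + (m.choose i : R) * f (i + 1) (m - i) := by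
    intro i hi
    obtain ⟨l, hl⟩ : ∃ l, m - i = l + 1 := ⟨m - i - 1, by have := mem_range.mp hi; omega⟩
    rw [hl, show m + 1 - i = l + 2 by omega, hf, mul_add, add_comm]
  rw [sum_congr rfl pascal, sum_add_distrib]
  -- The binomial expansion brings in `f (m + 1) 0`, where Pascal's rule is not assumed; it cancels.
  apply add_right_cancel (b := f (m + 1) 0)
  rw [split]
  abel

noncomputable def betaFn (a b : ℝ) : ℝ := Real.Gamma a * Real.Gamma b / Real.Gamma (a + b)

theorem betaFn_pos {a b : ℝ} (ha : 0 < a) (hb : 0 < b) : 0 < betaFn a b := by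
  unfold betaFn
  have := Real.Gamma_pos_of_pos ha
  have := Real.Gamma_pos_of_pos hb
  have := Real.Gamma_pos_of_pos (add_pos ha hb)
  positivity

theorem betaFn_add_one_left_add_betaFn_add_one_right {a b : ℝ} (ha : 0 < a) (hb : 0 < b) :
    betaFn (a + 1) b + betaFn a (b + 1) = betaFn a b := by
  have hab : 0 < a + b := add_pos ha hb
  have hΓ := (Real.Gamma_pos_of_pos hab).ne'
  simp only [betaFn, Real.Gamma_add_one ha.ne', Real.Gamma_add_one hb.ne',
    show a + 1 + b = a + b + 1 by ring, show a + (b + 1) = a + b + 1 by ring,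
    Real.Gamma_add_one hab.ne']
  field_simp

noncomputable def betaSplitNorm (β : ℝ) (n : ℕ) : ℝ :=
  ∑ k ∈ Icc 1 (n - 1),
    ((n - 1).choose (k - 1) : ℝ) * betaFn ((k : ℝ) + β + 1) (((n : ℝ) - k) + β + 1)

noncomputable def betaSplit (β : ℝ) (i j : ℕ) : ℝ :=
  betaFn ((i : ℝ) + β + 1) ((j : ℝ) + β + 1) / betaSplitNorm β (i + j)

theorem betaSplitNorm_succ_eq_sum_range (β : ℝ) (m : ℕ) :
    betaSplitNorm β (m + 1) =
      ∑ i ∈ range m, (m.choose i : ℝ) * betaFn ((i : ℝ) + β + 2) (((m - i : ℕ) : ℝ) + β + 1) := by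
  rw [betaSplitNorm, Nat.add_sub_cancel, ← Ico_add_one_right_eq_Icc, sum_Ico_eq_sum_range,
    Nat.add_sub_cancel]
  refine sum_congr rfl fun i hi ↦ ?_
  rw [Nat.cast_sub (mem_range.mp hi).le, add_tsub_cancel_left]
  push_cast
  ring_nf

theorem betaSplitNorm_pos {β : ℝ} (hβ : -2 < β) {n : ℕ} (hn : 2 ≤ n) : 0 < betaSplitNorm β n := by
  obtain ⟨m, rfl⟩ := Nat.exists_eq_add_of_le' (show 1 ≤ n by omega)
  rw [betaSplitNorm_succ_eq_sum_range]
  refine sum_pos (fun i hi ↦ mul_pos ?_ (betaFn_pos ?_ ?_)) (nonempty_range_iff.mpr (by omega))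
  · exact_mod_cast Nat.choose_pos (mem_range.mp hi).le
  · linarith [(i.cast_nonneg : (0 : ℝ) ≤ i)]
  · have : (1 : ℝ) ≤ ((m - i : ℕ) : ℝ) := by
      exact_mod_cast (show 1 ≤ m - i by have := mem_range.mp hi; omega)
    linarith

theorem betaSplitNorm_succ {β : ℝ} (hβ : -2 < β) {n : ℕ} (hn : n ≠ 0) :
    betaSplitNorm β (n + 1) = betaSplitNorm β n + betaFn ((n : ℝ) + β + 1) (β + 2) := by
  obtain ⟨m, rfl⟩ := Nat.exists_eq_add_one_of_ne_zero hn
  have pascal : ∀ i l : ℕ,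
      betaFn ((i : ℝ) + β + 2) (((l + 1 : ℕ) : ℝ) + β + 1) =
        betaFn (((i + 1 : ℕ) : ℝ) + β + 2) (((l + 1 : ℕ) : ℝ) + β + 1) +
          betaFn ((i : ℝ) + β + 2) (((l + 2 : ℕ) : ℝ) + β + 1) := by
    intro i l
    have hi : (0 : ℝ) ≤ i := i.cast_nonneg
    have hl : (0 : ℝ) ≤ l := l.cast_nonneg
    rw [← betaFn_add_one_left_add_betaFn_add_one_right (by linarith) (by push_cast; linarith)]
    push_cast
    ring_nf
  rw [betaSplitNorm_succ_eq_sum_range, betaSplitNorm_succ_eq_sum_range,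
    sum_range_choose_mul_succ_of_pascal
      (fun i l ↦ betaFn ((i : ℝ) + β + 2) ((l : ℝ) + β + 1)) pascal]
  congr 2 <;> push_cast <;> ring

theorem betaSplit_consistent {β : ℝ} (hβ : -2 < β) {i j : ℕ} (hi : 1 ≤ i) (hj : 1 ≤ j) :
    betaSplit β i j =
      betaSplit β (i + 1) j + betaSplit β i (j + 1) + betaSplit β (i + j) 1 * betaSplit β i j := by
  have ha : (0 : ℝ) < i + β + 1 := by linarith [(Nat.one_le_cast (α := ℝ)).mpr hi]
  have hb : (0 : ℝ) < j + β + 1 := by linarith [(Nat.one_le_cast (α := ℝ)).mpr hj]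
  have hZ := betaSplitNorm_pos hβ (show 2 ≤ i + j by omega)
  have hw : 0 < betaFn (((i + j : ℕ) : ℝ) + β + 1) (β + 2) :=
    betaFn_pos (by push_cast; linarith) (by linarith)
  have split := betaFn_add_one_left_add_betaFn_add_one_right ha hb
  unfold betaSplit
  rw [show i + 1 + j = i + j + 1 by ring, show i + (j + 1) = i + j + 1 by ring,
    betaSplitNorm_succ hβ (by omega)]
  push_cast at split hw ⊢
  rw [show (i : ℝ) + 1 + β + 1 = i + β + 1 + 1 by ring,
    show (j : ℝ) + 1 + β + 1 = j + β + 1 + 1 by ring, show (1 : ℝ) + β + 1 = β + 2 by ring,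
    ← split]
  field_simp

/-- the beta-splitting rule built from the Beta function satisfies
the consistency equation. -/
theorem beta_splitting_consistent
    (β : ℝ) (hβ : β > -2)
    (B : ℝ → ℝ → ℝ)
    (hB : ∀ a b : ℝ, B a b = Real.Gamma a * Real.Gamma b / Real.Gamma (a + b))
    (Z : ℕ → ℝ)
    (hZ : ∀ n : ℕ, 2 ≤ n →
      Z n = ∑ k ∈ Finset.Icc 1 (n - 1),
        ((n - 1).choose (k - 1) : ℝ) * B ((k : ℝ) + β + 1) (((n : ℝ) - k) + β + 1))
    (p : ℕ → ℕ → ℝ)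
    (hp : ∀ i j : ℕ, 1 ≤ i → 1 ≤ j →
      p i j = B ((i : ℝ) + β + 1) ((j : ℝ) + β + 1) / Z (i + j)) :
    ∀ i j : ℕ, 1 ≤ i → 1 ≤ j →
      p i j = p (i + 1) j + p i (j + 1) + p (i + j) 1 * p i j := by
  obtain rfl : B = betaFn := funext fun a ↦ funext (hB a)
  have hp' : ∀ i j : ℕ, 1 ≤ i → 1 ≤ j → p i j = betaSplit β i j := fun i j hi hj ↦ by
    rw [hp i j hi hj, hZ (i + j) (by omega), betaSplit, betaSplitNorm]
  intro i j hi hj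
  rw [hp' i j hi hj, hp' (i + 1) j (by omega) hj, hp' i (j + 1) hi (by omega),
    hp' (i + j) 1 (by omega) le_rfl]
  exact betaSplit_consistent hβ hi hj
end

section
/- Suppose p(i,j) = w(i)w(j)/Z(i+j) for positive weights w with w(1) = 1, where Z(n) = Σ_{k=1}^{n-1} C(n-1,k-1) w(k)w(n-k), and p satisfies the consistency equation p(i,j) = p(i+1,j) + p(i,j+1) + p(i+j,1)p(i,j) for all i,j ≥ 1. Then the sequence W_j = w(j+1)/w(j) is affine in j: there exist a, b with W_j = a + bj for all j ≥ 1. -/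
/-!
Substituting `p i j = w i * w j / Z (i + j)` into the consistency equation and dividing by
`p i j` gives `W i + W j = (Z (i + j + 1) - w (i + j) * w 1) / Z (i + j)`, so `W i + W j` depends
only on `i + j`. Comparing the decompositions `(j + 1) + 1` and `j + 2` of the same integer gives
`W (j + 1) - W j = W 2 - W 1` for every `j ≥ 1`, so `W` is affine.
-/

open Finset

theorem exists_affine_of_add_eq_comp_add {R : Type*} [CommRing R] {W : ℕ → R} {F : ℕ → R}
    (hWF : ∀ i j : ℕ, 1 ≤ i → 1 ≤ j → W i + W j = F (i + j)) :
    ∃ a b : R, ∀ j : ℕ, 1 ≤ j → W j = a + b * j := by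
  refine ⟨W 1 - (W 2 - W 1), W 2 - W 1, fun j hj => ?_⟩
  induction j, hj using Nat.le_induction with
  | base => push_cast; ring
  | succ j hj ih =>
    have hstep : W (j + 1) + W 1 = W j + W 2 := by
      rw [hWF _ _ (by omega) le_rfl, hWF _ _ hj (by omega)]
    push_cast
    linear_combination hstep + ih

theorem gibbs_normalizer_pos {w Z : ℕ → ℝ} (hw : ∀ j : ℕ, 1 ≤ j → 0 < w j)
    (hZ : ∀ n : ℕ, 2 ≤ n →
      Z n = ∑ k ∈ Finset.Icc 1 (n - 1), ((n - 1).choose (k - 1) : ℝ) * w k * w (n - k))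
    {n : ℕ} (hn : 2 ≤ n) : 0 < Z n := by
  rw [hZ n hn]
  refine Finset.sum_pos (fun k hk => ?_) (Finset.nonempty_Icc.mpr (by omega))
  rw [Finset.mem_Icc] at hk
  have hchoose : 0 < ((n - 1).choose (k - 1) : ℝ) := by
    exact_mod_cast Nat.choose_pos (by omega)
  have := hw k hk.1
  have := hw (n - k) (by omega)
  positivity

theorem ratio_add_ratio_of_consistent {w Z : ℕ → ℝ} {p : ℕ → ℕ → ℝ}
    (hw : ∀ j : ℕ, 1 ≤ j → 0 < w j) (hZ : ∀ n : ℕ, 2 ≤ n → 0 < Z n)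
    (hp : ∀ i j : ℕ, 1 ≤ i → 1 ≤ j → p i j = w i * w j / Z (i + j))
    (hcons : ∀ i j : ℕ, 1 ≤ i → 1 ≤ j →
      p i j = p (i + 1) j + p i (j + 1) + p (i + j) 1 * p i j)
    {i j : ℕ} (hi : 1 ≤ i) (hj : 1 ≤ j) :
    w (i + 1) / w i + w (j + 1) / w j = (Z (i + j + 1) - w (i + j) * w 1) / Z (i + j) := by
  have h := hcons i j hi hj
  rw [hp i j hi hj, hp (i + 1) j (by omega) hj, hp i (j + 1) hi (by omega),
    hp (i + j) 1 (by omega) le_rfl, show i + 1 + j = i + j + 1 by omega,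
    show i + (j + 1) = i + j + 1 by omega] at h
  have := hw i hi
  have := hw j hj
  have := hZ (i + j) (by omega)
  have := hZ (i + j + 1) (by omega)
  field_simp at h ⊢
  linear_combination -h

theorem gibbs_consistent_ratio_affine_general
    (w : ℕ → ℝ) (hw : ∀ j : ℕ, 1 ≤ j → 0 < w j)
    (Z : ℕ → ℝ)
    (hZ : ∀ n : ℕ, 2 ≤ n →
      Z n = ∑ k ∈ Finset.Icc 1 (n - 1), ((n - 1).choose (k - 1) : ℝ) * w k * w (n - k))
    (p : ℕ → ℕ → ℝ)
    (hp : ∀ i j : ℕ, 1 ≤ i → 1 ≤ j → p i j = w i * w j / Z (i + j))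
    (hcons : ∀ i j : ℕ, 1 ≤ i → 1 ≤ j →
      p i j = p (i + 1) j + p i (j + 1) + p (i + j) 1 * p i j) :
    ∃ a b : ℝ, ∀ j : ℕ, 1 ≤ j → w (j + 1) / w j = a + b * (j : ℝ) :=
  exists_affine_of_add_eq_comp_add (F := fun n => (Z (n + 1) - w n * w 1) / Z n)
    fun _ _ hi hj =>
      ratio_add_ratio_of_consistent hw (fun _ hn => gibbs_normalizer_pos hw hZ hn) hp hcons hi hj

/-- for a consistent binary Gibbs splitting rule, the ratio sequence
`W j = w (j+1) / w j` is affine in `j`. -/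
theorem gibbs_consistent_ratio_affine
    (w : ℕ → ℝ) (hw : ∀ j : ℕ, 1 ≤ j → 0 < w j) (hw1 : w 1 = 1)
    (Z : ℕ → ℝ)
    (hZ : ∀ n : ℕ, 2 ≤ n →
      Z n = ∑ k ∈ Finset.Icc 1 (n - 1), ((n - 1).choose (k - 1) : ℝ) * w k * w (n - k))
    (p : ℕ → ℕ → ℝ)
    (hp : ∀ i j : ℕ, 1 ≤ i → 1 ≤ j → p i j = w i * w j / Z (i + j))
    (hcons : ∀ i j : ℕ, 1 ≤ i → 1 ≤ j →
      p i j = p (i + 1) j + p i (j + 1) + p (i + j) 1 * p i j) :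
    ∃ a b : ℝ, ∀ j : ℕ, 1 ≤ j → w (j + 1) / w j = a + b * (j : ℝ) :=
  gibbs_consistent_ratio_affine_general w hw Z hZ p hp hcons
end

section
/- Let ν be a symmetric measure on (0,1) (invariant under x ↦ 1-x) with ∫ x(1-x) ν(dx) < ∞, and suppose its mixed moments factorize: ∫ x^i (1-x)^j ν(dx) = w(i)w(j) for all integers i,j ≥ 1 and some sequence w(i) ≥ 0. Then ν is a constant multiple of the measure x^β(1-x)^β dx for some β > -2, or a multiple of the Dirac mass at 1/2. -/
open MeasureTheory Set
open scoped ENNReal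

/-!
Since `x + (1 - x) = 1`, the mixed moments `m i j = ∫ x^i (1-x)^j dν` satisfy
`m i j = m (i+1) j + m i (j+1)`. With `m i j = w i * w j` this forces `w 1 = 2 w 2`
(or `w 1 = w 2 = 0`), i.e. `4 m 2 2 = m 1 1`. But `m 1 1 / 4 - m 2 2` is the integral of
`x (1-x) (x - 1/2)^2`, which is positive on `(0,1)` away from `1/2`, so `ν` sits on `{1/2}`.
-/

noncomputable def mixedMoment (μ : Measure ℝ) (i j : ℕ) : ℝ := ∫ x, x ^ i * (1 - x) ^ j ∂μ

lemma pow_mul_one_sub_pow_le {x : ℝ} (hx : x ∈ Icc 0 1) {i j : ℕ} (hi : 1 ≤ i) (hj : 1 ≤ j) :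
    x ^ i * (1 - x) ^ j ≤ x * (1 - x) := by
  obtain ⟨hx0, hx1⟩ := hx
  exact mul_le_mul (pow_le_of_le_one hx0 hx1 (by omega))
    (pow_le_of_le_one (by linarith) (by linarith) (by omega)) (by positivity) hx0

section UnitInterval

variable {μ : Measure ℝ}

lemma integrable_mul_one_sub (hμ : ∀ᵐ x ∂μ, x ∈ Icc 0 1)
    (hint : ∫⁻ x, ENNReal.ofReal (x * (1 - x)) ∂μ < ⊤) :
    Integrable (fun x => x * (1 - x)) μ := by
  have hnonneg : 0 ≤ᵐ[μ] fun x => x * (1 - x) := by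
    filter_upwards [hμ] with x ⟨hx0, hx1⟩
    exact mul_nonneg hx0 (by linarith)
  exact ⟨by fun_prop, (hasFiniteIntegral_iff_ofReal hnonneg).mpr hint⟩

lemma integrable_pow_mul_one_sub_pow (hμ : ∀ᵐ x ∂μ, x ∈ Icc 0 1)
    (hint : ∫⁻ x, ENNReal.ofReal (x * (1 - x)) ∂μ < ⊤) {i j : ℕ} (hi : 1 ≤ i) (hj : 1 ≤ j) :
    Integrable (fun x => x ^ i * (1 - x) ^ j) μ := by
  refine (integrable_mul_one_sub hμ hint).mono' (by fun_prop) ?_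
  filter_upwards [hμ] with x hx
  rw [Real.norm_of_nonneg (mul_nonneg (pow_nonneg hx.1 _) (pow_nonneg (by linarith [hx.2]) _))]
  exact pow_mul_one_sub_pow_le hx hi hj

lemma mixedMoment_eq_add (hμ : ∀ᵐ x ∂μ, x ∈ Icc 0 1)
    (hint : ∫⁻ x, ENNReal.ofReal (x * (1 - x)) ∂μ < ⊤) {i j : ℕ} (hi : 1 ≤ i) (hj : 1 ≤ j) :
    mixedMoment μ i j = mixedMoment μ (i + 1) j + mixedMoment μ i (j + 1) := by
  rw [mixedMoment, mixedMoment, mixedMoment, ← integral_add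
    (integrable_pow_mul_one_sub_pow hμ hint (by omega) hj)
    (integrable_pow_mul_one_sub_pow hμ hint hi (by omega))]
  congr 1 with x
  ring

lemma integral_mul_one_sub_mul_sq_sub_half (hμ : ∀ᵐ x ∂μ, x ∈ Icc 0 1)
    (hint : ∫⁻ x, ENNReal.ofReal (x * (1 - x)) ∂μ < ⊤) :
    ∫ x, x * (1 - x) * (x - 1 / 2) ^ 2 ∂μ = mixedMoment μ 1 1 / 4 - mixedMoment μ 2 2 := by
  rw [mixedMoment, mixedMoment, ← integral_div, ← integral_sub
    ((integrable_pow_mul_one_sub_pow hμ hint le_rfl le_rfl).div_const 4)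
    (integrable_pow_mul_one_sub_pow hμ hint one_le_two one_le_two)]
  congr 1 with x
  ring

lemma four_mul_mixedMoment_two_two_of_factorization (hμ : ∀ᵐ x ∂μ, x ∈ Icc 0 1)
    (hint : ∫⁻ x, ENNReal.ofReal (x * (1 - x)) ∂μ < ⊤) (w : ℕ → ℝ)
    (hmom : ∀ i j : ℕ, 1 ≤ i → 1 ≤ j → mixedMoment μ i j = w i * w j) :
    4 * mixedMoment μ 2 2 = mixedMoment μ 1 1 := by
  have h11 := mixedMoment_eq_add hμ hint le_rfl le_rfl
  have h21 := mixedMoment_eq_add hμ hint one_le_two le_rfl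
  simp only [hmom, Nat.reduceAdd, Nat.one_le_ofNat, le_refl] at h11 h21 ⊢
  rcases eq_or_ne (w 1) 0 with h1 | h1
  · rw [h1] at h21 ⊢
    nlinarith
  · rw [mul_left_cancel₀ h1 (by linarith : w 1 * w 1 = w 1 * (2 * w 2))]
    ring

lemma ae_eq_half_of_integral_mul_one_sub_mul_sq_sub_half_eq_zero
    (hμ : ∀ᵐ x ∂μ, x ∈ Ioo 0 1) (hint : ∫⁻ x, ENNReal.ofReal (x * (1 - x)) ∂μ < ⊤)
    (hzero : ∫ x, x * (1 - x) * (x - 1 / 2) ^ 2 ∂μ = 0) :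
    ∀ᵐ x ∂μ, x = 1 / 2 := by
  have hμ' : ∀ᵐ x ∂μ, x ∈ Icc 0 1 := hμ.mono fun x hx => Ioo_subset_Icc_self hx
  have hintegrable : Integrable (fun x => x * (1 - x) * (x - 1 / 2) ^ 2) μ :=
    (((integrable_pow_mul_one_sub_pow hμ' hint le_rfl le_rfl).div_const 4).sub
      (integrable_pow_mul_one_sub_pow hμ' hint one_le_two one_le_two)).congr
      (Filter.Eventually.of_forall fun x => by simp only [Pi.sub_apply]; ring)
  have hnonneg : 0 ≤ᵐ[μ] fun x => x * (1 - x) * (x - 1 / 2) ^ 2 := by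
    filter_upwards [hμ'] with x ⟨hx0, hx1⟩
    have : 0 ≤ 1 - x := by linarith
    positivity
  filter_upwards [(integral_eq_zero_iff_of_nonneg_ae hnonneg hintegrable).mp hzero, hμ]
    with x hx ⟨hx0, hx1⟩
  simp only [Pi.zero_apply, mul_eq_zero, pow_eq_zero_iff two_ne_zero, sub_eq_zero] at hx
  rcases hx with (hx | hx) | hx <;> linarith

end UnitInterval

lemma eq_smul_dirac_of_ae_eq {α : Type*} [MeasurableSpace α] {μ : Measure α} {a : α}
    (h : ∀ᵐ x ∂μ, x = a) : μ = μ {a} • Measure.dirac a := by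
  rw [← Measure.restrict_singleton, Measure.restrict_eq_self_of_ae_mem (s := {a}) h]

theorem moment_factorization_characterizes_beta_general
    (ν : Measure ℝ)
    (hsupp : ν (Set.Ioo (0 : ℝ) 1)ᶜ = 0)
    (hint : ∫⁻ x in Set.Ioo (0 : ℝ) 1, ENNReal.ofReal (x * (1 - x)) ∂ν < ⊤)
    (w : ℕ → ℝ)
    (hmom : ∀ i j : ℕ, 1 ≤ i → 1 ≤ j →
      ∫ x in Set.Ioo (0 : ℝ) 1, x ^ i * (1 - x) ^ j ∂ν = w i * w j) :
    ∃ c : ℝ≥0∞,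
      (∃ β : ℝ, β > -2 ∧
        ν = c • ((volume.restrict (Set.Ioo (0 : ℝ) 1)).withDensity
          fun x => ENNReal.ofReal (x ^ β * (1 - x) ^ β))) ∨
      ν = c • Measure.dirac (1 / 2 : ℝ) := by
  have hν : ∀ᵐ x ∂ν, x ∈ Ioo (0 : ℝ) 1 := ae_iff.mpr hsupp
  rw [Measure.restrict_eq_self_of_ae_mem hν] at hint hmom
  have hν' : ∀ᵐ x ∂ν, x ∈ Icc (0 : ℝ) 1 := hν.mono fun x hx => Ioo_subset_Icc_self hx
  have h22 := four_mul_mixedMoment_two_two_of_factorization hν' hint w hmom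
  have hhalf := ae_eq_half_of_integral_mul_one_sub_mul_sq_sub_half_eq_zero hν hint
    (by rw [integral_mul_one_sub_mul_sq_sub_half hν' hint]; linarith)
  exact ⟨ν {1 / 2}, Or.inr (eq_smul_dirac_of_ae_eq hhalf)⟩

/-- Corollary 3: a symmetric measure on `(0,1)` with
`∫ x(1-x) ν(dx) < ∞` whose mixed moments factorize is a multiple of a
beta-splitting measure `x^β (1-x)^β dx`, `β > -2`, or of the Dirac mass at `1/2`. -/
theorem moment_factorization_characterizes_beta
    (ν : Measure ℝ)
    (hsupp : ν (Set.Ioo (0 : ℝ) 1)ᶜ = 0)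
    (hsym : Measure.map (fun x => 1 - x) ν = ν)
    (hint : ∫⁻ x in Set.Ioo (0 : ℝ) 1, ENNReal.ofReal (x * (1 - x)) ∂ν < ⊤)
    (w : ℕ → ℝ) (hw : ∀ i : ℕ, 1 ≤ i → 0 ≤ w i)
    (hmom : ∀ i j : ℕ, 1 ≤ i → 1 ≤ j →
      ∫ x in Set.Ioo (0 : ℝ) 1, x ^ i * (1 - x) ^ j ∂ν = w i * w j) :
    ∃ c : ℝ≥0∞,
      (∃ β : ℝ, β > -2 ∧
        ν = c • ((volume.restrict (Set.Ioo (0 : ℝ) 1)).withDensity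
          fun x => ENNReal.ofReal (x ^ β * (1 - x) ^ β))) ∨
      ν = c • Measure.dirac (1 / 2 : ℝ) :=
  moment_factorization_characterizes_beta_general ν hsupp hint w hmom
end

section
/- Let ψ(j) > 0 for j ≥ 1 with ψ(1) = 1, and define a probability on binary fragmentation trees of [n] by P(T = t) = (1/w(n)) Π_{A ∈ t} ψ(#A) where w(n) = Σ_{t ∈ B_[n]} Π_{A ∈ t} ψ(#A). Then this model is Markovian with splitting rule of Gibbs form p(i,j) = w(i)w(j)/Z(i+j) where Z(m) = w(m)/ψ(m). -/
/-!
Every block of a fragmentation other than the root is a child of exactly one internal block, so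
for any weight `g`, `g B · ∏_{A internal} g(A₁) g(A₂) = ∏_{A ∈ t} g(A)`; by induction on `B` this
follows from splitting `t` into fragmentations of the two children of `B`. With `g A = w(#A)`,
the splitting probabilities `p(#A₁, #A₂) = w(#A₁) w(#A₂) ψ(#A) / w(#A)` therefore multiply to
`∏_{A ∈ t} ψ(#A) / w(n)`, because the leaves are singletons and `ψ 1 = w 1 = 1`.
-/

open Finset

/-- `t` is a binary fragmentation (hierarchy) of the finite set `B`:
a laminar family of nonempty subsets of `B` containing `B`, in which every
member with at least two elements splits into exactly two disjoint nonempty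
members (its two children), recursively down to singletons. -/
def IsBinFrag (B : Finset ℕ) (t : Finset (Finset ℕ)) : Prop :=
  B ∈ t ∧ (∀ A ∈ t, A.Nonempty ∧ A ⊆ B) ∧
  (∀ C ∈ t, ∀ D ∈ t, C ⊆ D ∨ D ⊆ C ∨ Disjoint C D) ∧
  (∀ b ∈ B, {b} ∈ t) ∧
  (∀ A ∈ t, 2 ≤ A.card →
    ∃ C ∈ t, ∃ D ∈ t, Disjoint C D ∧ C ∪ D = A ∧ C.Nonempty ∧ D.Nonempty)

-- The (finite) set of all binary fragmentations of `B`.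
open scoped Classical in
noncomputable def allBinFrags (B : Finset ℕ) : Finset (Finset (Finset ℕ)) :=
  B.powerset.powerset.filter (fun t => IsBinFrag B t)

/-- `ch` assigns to each internal vertex `A` of the fragmentation `t` its
two children `(ch A).1`, `(ch A).2`. -/
def IsChildFun (t : Finset (Finset ℕ)) (ch : Finset ℕ → Finset ℕ × Finset ℕ) : Prop :=
  ∀ A ∈ t, 2 ≤ A.card →
    (ch A).1 ∈ t ∧ (ch A).2 ∈ t ∧ Disjoint (ch A).1 (ch A).2 ∧
    (ch A).1 ∪ (ch A).2 = A ∧ (ch A).1.Nonempty ∧ (ch A).2.Nonempty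

namespace IsBinFrag

variable {B C D : Finset ℕ} {t t₁ t₂ : Finset (Finset ℕ)}

theorem nonempty_of_mem {A : Finset ℕ} (h : IsBinFrag B t) (hA : A ∈ t) : A.Nonempty :=
  (h.2.1 A hA).1

theorem singleton (c : ℕ) : IsBinFrag {c} {{c}} := by
  refine ⟨mem_singleton_self _, ?_, ?_, ?_, ?_⟩ <;> simp

theorem eq_singleton {c : ℕ} (h : IsBinFrag {c} t) : t = {{c}} := by
  refine Subset.antisymm (fun A hA => mem_singleton.2 ?_) (singleton_subset_iff.2 h.1)
  exact (subset_singleton_iff.1 (h.2.1 A hA).2).resolve_left (h.nonempty_of_mem hA).ne_empty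

theorem join (h₁ : IsBinFrag C t₁) (h₂ : IsBinFrag D t₂) (hCD : Disjoint C D) :
    IsBinFrag (C ∪ D) (insert (C ∪ D) (t₁ ∪ t₂)) := by
  obtain ⟨hC, hmem₁, hlam₁, hsing₁, hsplit₁⟩ := h₁
  obtain ⟨hD, hmem₂, hlam₂, hsing₂, hsplit₂⟩ := h₂
  have hmem : ∀ A ∈ insert (C ∪ D) (t₁ ∪ t₂), A.Nonempty ∧ A ⊆ C ∪ D := by
    simp only [mem_insert, mem_union]
    rintro A (rfl | hA | hA)
    · exact ⟨(hmem₁ C hC).1.mono subset_union_left, subset_rfl⟩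
    · exact ⟨(hmem₁ A hA).1, (hmem₁ A hA).2.trans subset_union_left⟩
    · exact ⟨(hmem₂ A hA).1, (hmem₂ A hA).2.trans subset_union_right⟩
  refine ⟨mem_insert_self _ _, hmem, ?_, ?_, ?_⟩
  · intro X hX Y hY
    rcases mem_insert.1 hX with rfl | hX
    · exact Or.inr (Or.inl (hmem Y hY).2)
    rcases mem_insert.1 hY with rfl | hY
    · exact Or.inl (hmem X (mem_insert_of_mem hX)).2
    rcases mem_union.1 hX with hX | hX <;> rcases mem_union.1 hY with hY | hY
    · exact hlam₁ X hX Y hY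
    · exact Or.inr (Or.inr (hCD.mono (hmem₁ X hX).2 (hmem₂ Y hY).2))
    · exact Or.inr (Or.inr (hCD.symm.mono (hmem₂ X hX).2 (hmem₁ Y hY).2))
    · exact hlam₂ X hX Y hY
  · intro b hb
    refine mem_insert_of_mem (mem_union.2 ?_)
    exact (mem_union.1 hb).imp (hsing₁ b) (hsing₂ b)
  · intro A hA hA2
    rcases mem_insert.1 hA with rfl | hA
    · exact ⟨C, by simp [hC], D, by simp [hD], hCD, rfl, (hmem₁ C hC).1, (hmem₂ D hD).1⟩
    rcases mem_union.1 hA with hA | hA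
    · obtain ⟨X, hX, Y, hY, hXY⟩ := hsplit₁ A hA hA2
      exact ⟨X, by simp [hX], Y, by simp [hY], hXY⟩
    · obtain ⟨X, hX, Y, hY, hXY⟩ := hsplit₂ A hA hA2
      exact ⟨X, by simp [hX], Y, by simp [hY], hXY⟩

theorem exists_of_nonempty (hB : B.Nonempty) : ∃ t, IsBinFrag B t := by
  induction hB using Finset.Nonempty.cons_induction with
  | singleton c => exact ⟨_, singleton c⟩
  | cons b B hb _ ih =>
    obtain ⟨t, ht⟩ := ih
    rw [cons_eq_insert, insert_eq]
    exact ⟨_, (singleton b).join ht (disjoint_singleton_left.2 hb)⟩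

theorem restrict (h : IsBinFrag B t) (hC : C ∈ t) : IsBinFrag C (t.filter (· ⊆ C)) := by
  obtain ⟨-, hmem, hlam, hsing, hsplit⟩ := h
  refine ⟨mem_filter.2 ⟨hC, subset_rfl⟩, ?_, ?_, ?_, ?_⟩
  · intro A hA
    exact ⟨(hmem A (mem_filter.1 hA).1).1, (mem_filter.1 hA).2⟩
  · intro X hX Y hY
    exact hlam X (mem_filter.1 hX).1 Y (mem_filter.1 hY).1
  · intro b hb
    exact mem_filter.2 ⟨hsing b ((hmem C hC).2 hb), singleton_subset_iff.2 hb⟩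
  · intro A hA hA2
    obtain ⟨hAt, hAC⟩ := mem_filter.1 hA
    obtain ⟨X, hX, Y, hY, hXY, hA, hXne, hYne⟩ := hsplit A hAt hA2
    refine ⟨X, mem_filter.2 ⟨hX, ?_⟩, Y, mem_filter.2 ⟨hY, ?_⟩, hXY, hA, hXne, hYne⟩
    · exact hA ▸ subset_union_left |>.trans hAC
    · exact hA ▸ subset_union_right |>.trans hAC

theorem disjoint_filter_subset (h : IsBinFrag B t) (hCD : Disjoint C D) :
    Disjoint (t.filter (· ⊆ C)) (t.filter (· ⊆ D)) := by
  refine disjoint_filter.2 fun A hA hAC hAD => ?_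
  obtain ⟨a, ha⟩ := h.nonempty_of_mem hA
  exact disjoint_left.1 hCD (hAC ha) (hAD ha)

theorem erase_eq_union (h : IsBinFrag B t) (hC : C ∈ t) (hD : D ∈ t) (hCD : Disjoint C D)
    (hB : C ∪ D = B) : t.erase B = t.filter (· ⊆ C) ∪ t.filter (· ⊆ D) := by
  ext A
  simp only [mem_erase, mem_union, mem_filter]
  constructor
  · rintro ⟨hAB, hA⟩
    have hAsub : A ⊆ C ∪ D := hB ▸ (h.2.1 A hA).2
    rcases h.2.2.1 A hA C hC with hAC | hCA | hAC
    · exact Or.inl ⟨hA, hAC⟩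
    · rcases h.2.2.1 A hA D hD with hAD | hDA | hAD
      · exact Or.inr ⟨hA, hAD⟩
      · exact absurd (Subset.antisymm (hB ▸ hAsub) (hB ▸ union_subset hCA hDA)) hAB
      · exact Or.inl ⟨hA, hAD.left_le_of_le_sup_right hAsub⟩
    · exact Or.inr ⟨hA, hAC.left_le_of_le_sup_left hAsub⟩
  · rintro (⟨hA, hAC⟩ | ⟨hA, hAD⟩)
    · refine ⟨fun hAB => ?_, hA⟩
      obtain ⟨d, hd⟩ := h.nonempty_of_mem hD
      exact disjoint_right.1 hCD hd (hAC (hAB ▸ hB ▸ mem_union_right C hd))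
    · refine ⟨fun hAB => ?_, hA⟩
      obtain ⟨c, hc⟩ := h.nonempty_of_mem hC
      exact disjoint_left.1 hCD hc (hAD (hAB ▸ hB ▸ mem_union_left D hc))

end IsBinFrag

theorem IsChildFun.restrict {t : Finset (Finset ℕ)} {ch : Finset ℕ → Finset ℕ × Finset ℕ}
    (h : IsChildFun t ch) (C : Finset ℕ) : IsChildFun (t.filter (· ⊆ C)) ch := by
  intro A hA hA2
  obtain ⟨hAt, hAC⟩ := mem_filter.1 hA
  obtain ⟨h₁, h₂, hdisj, hA, hne₁, hne₂⟩ := h A hAt hA2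
  refine ⟨mem_filter.2 ⟨h₁, ?_⟩, mem_filter.2 ⟨h₂, ?_⟩, hdisj, hA, hne₁, hne₂⟩
  · exact hA ▸ subset_union_left |>.trans hAC
  · exact hA ▸ subset_union_right |>.trans hAC

namespace IsBinFrag

variable {B : Finset ℕ} {t : Finset (Finset ℕ)}

theorem prod_filter_two_le_card {M : Type*} [CommMonoid M] (h : IsBinFrag B t) {f : ℕ → M}
    (hf : f 1 = 1) : ∏ A ∈ t.filter (fun A => 2 ≤ A.card), f A.card = ∏ A ∈ t, f A.card := by
  refine prod_filter_of_ne fun A hA hfA => ?_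
  have := card_pos.2 (h.nonempty_of_mem hA)
  have : A.card ≠ 1 := fun h1 => hfA (h1 ▸ hf)
  omega

theorem mul_prod_children {M : Type*} [CommMonoid M] (g : Finset ℕ → M)
    {ch : Finset ℕ → Finset ℕ × Finset ℕ} (h : IsBinFrag B t) (hch : IsChildFun t ch) :
    g B * ∏ A ∈ t.filter (fun A => 2 ≤ A.card), (g (ch A).1 * g (ch A).2) = ∏ A ∈ t, g A := by
  induction B using Finset.strongInduction generalizing t with
  | H B ih =>
  by_cases hB : 2 ≤ B.card
  · obtain ⟨hC, hD, hCD, hunion, hCne, hDne⟩ := hch B h.1 hB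
    have hCB : (ch B).1 ⊂ B := (left_lt_sup.2 fun hDsub =>
      hDne.ne_empty (disjoint_self_iff_empty _ |>.1 (hCD.mono_left hDsub))).trans_eq hunion
    have hDB : (ch B).2 ⊂ B := (right_lt_sup.2 fun hCsub =>
      hCne.ne_empty (disjoint_self_iff_empty _ |>.1 (hCD.mono_right hCsub))).trans_eq hunion
    have ihC := ih _ hCB (h.restrict hC) (hch.restrict _)
    have ihD := ih _ hDB (h.restrict hD) (hch.restrict _)
    rw [← mul_prod_erase _ _ (mem_filter.2 ⟨h.1, hB⟩), ← mul_prod_erase t _ h.1, ← filter_erase,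
      h.erase_eq_union hC hD hCD hunion, filter_union,
      prod_union (disjoint_filter_filter (h.disjoint_filter_subset hCD)),
      prod_union (h.disjoint_filter_subset hCD), ← ihC, ← ihD]
    ac_rfl
  · obtain ⟨c, rfl⟩ : ∃ c, B = {c} := by
      have := card_pos.2 (h.nonempty_of_mem h.1)
      exact card_eq_one.1 (by omega)
    rw [h.eq_singleton, filter_singleton, if_neg hB, prod_empty, prod_singleton, mul_one]

end IsBinFrag

theorem mem_allBinFrags {B : Finset ℕ} {t : Finset (Finset ℕ)} :
    t ∈ allBinFrags B ↔ IsBinFrag B t := by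
  simp only [allBinFrags, mem_filter, mem_powerset, and_iff_right_iff_imp]
  exact fun h A hA => mem_powerset.2 (h.2.1 A hA).2

theorem allBinFrags_singleton (c : ℕ) : allBinFrags {c} = {{{c}}} := by
  ext t
  rw [mem_allBinFrags, mem_singleton]
  exact ⟨IsBinFrag.eq_singleton, fun h => h ▸ IsBinFrag.singleton c⟩

theorem sum_allBinFrags_prod_pos {ψ : ℕ → ℝ} (hψ : ∀ j : ℕ, 1 ≤ j → 0 < ψ j) {B : Finset ℕ}
    (hB : B.Nonempty) : 0 < ∑ t ∈ allBinFrags B, ∏ A ∈ t, ψ A.card := by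
  obtain ⟨t, ht⟩ := IsBinFrag.exists_of_nonempty hB
  refine sum_pos (fun s hs => prod_pos fun A hA => hψ _ ?_) ⟨t, mem_allBinFrags.2 ht⟩
  exact card_pos.2 ((mem_allBinFrags.1 hs).nonempty_of_mem hA)

/-- the Gibbs tree model `P(T = t) = (1/w n) ∏_{A ∈ t} ψ(#A)` is
Markovian with splitting rule of Gibbs form `p i j = w i * w j / Z (i+j)`,
`Z m = w m / ψ m`; i.e. the normalized ψ-product equals the Markovian product
of splitting probabilities over internal vertices. -/
theorem gibbs_tree_model_is_markovian
    (ψ : ℕ → ℝ) (hψ : ∀ j : ℕ, 1 ≤ j → 0 < ψ j) (hψ1 : ψ 1 = 1)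
    (w : ℕ → ℝ)
    (hw : ∀ n : ℕ, 1 ≤ n →
      w n = ∑ t ∈ allBinFrags (Finset.Icc 1 n), ∏ A ∈ t, ψ A.card)
    (Z : ℕ → ℝ) (hZ : ∀ m : ℕ, 2 ≤ m → Z m = w m / ψ m)
    (p : ℕ → ℕ → ℝ)
    (hp : ∀ i j : ℕ, 1 ≤ i → 1 ≤ j → p i j = w i * w j / Z (i + j)) :
    ∀ n : ℕ, 1 ≤ n → ∀ t ∈ allBinFrags (Finset.Icc 1 n),
      ∀ ch : Finset ℕ → Finset ℕ × Finset ℕ, IsChildFun t ch →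
        (1 / w n) * ∏ A ∈ t, ψ A.card =
          ∏ A ∈ t.filter (fun A => 2 ≤ A.card), p (ch A).1.card (ch A).2.card := by
  intro n hn t ht ch hch
  have hfrag := mem_allBinFrags.1 ht
  have hw_pos : ∀ m, 1 ≤ m → 0 < w m := fun m hm =>
    hw m hm ▸ sum_allBinFrags_prod_pos hψ (nonempty_Icc.2 hm)
  have hw1 : w 1 = 1 := by
    rw [hw 1 le_rfl, Icc_self, allBinFrags_singleton, sum_singleton, prod_singleton, card_singleton,
      hψ1]
  have hsplit : ∀ A ∈ t.filter (fun A => 2 ≤ A.card), p (ch A).1.card (ch A).2.card =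
      w (ch A).1.card * w (ch A).2.card * ψ A.card / w A.card := by
    intro A hA
    obtain ⟨hAt, hA2⟩ := mem_filter.1 hA
    obtain ⟨-, -, hdisj, hunion, hne₁, hne₂⟩ := hch A hAt hA2
    rw [hp _ _ (card_pos.2 hne₁) (card_pos.2 hne₂), ← card_union_of_disjoint hdisj, hunion,
      hZ _ hA2, div_div_eq_mul_div]
  have htelescope := hfrag.mul_prod_children (fun A => w A.card) hch
  rw [← hfrag.prod_filter_two_le_card hw1, Nat.card_Icc, Nat.add_sub_cancel] at htelescope
  have hW : ∏ A ∈ t.filter (fun A => 2 ≤ A.card), w A.card ≠ 0 :=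
    (prod_pos fun A hA => hw_pos _ (card_pos.2 (hfrag.nonempty_of_mem (mem_filter.1 hA).1))).ne'
  rw [prod_congr rfl hsplit, prod_div_distrib, prod_mul_distrib, hfrag.prod_filter_two_le_card hψ1,
    eq_div_iff hW, ← htelescope]
  field_simp [(hw_pos n hn).ne']
end

section
/- Let p be a consistent binary splitting rule and (λ_n)_{n≥2} satisfy λ_{n+1}(1 - p(n,1)) = λ_n for n ≥ 2 with λ_2 > 0 fixed. Then p is uniquely determined by (λ_n)_{n≥2}: if p and p' are two consistent splitting rules with the same rate sequence, then p = p'. -/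
open Finset

/-- A consistent binary splitting rule: nonnegative, symmetric, normalized,
and satisfying the consistency equation. -/
def IsConsistentSplittingRule (p : ℕ → ℕ → ℝ) : Prop :=
  (∀ i j : ℕ, 1 ≤ i → 1 ≤ j → 0 ≤ p i j) ∧
  (∀ i j : ℕ, 1 ≤ i → 1 ≤ j → p i j = p j i) ∧
  (∀ n : ℕ, 2 ≤ n →
    ∑ k ∈ Finset.Icc 1 (n - 1), ((n - 1).choose (k - 1) : ℝ) * p k (n - k) = 1) ∧
  (∀ i j : ℕ, 1 ≤ i → 1 ≤ j →
    p i j = p (i + 1) j + p i (j + 1) + p (i + j) 1 * p i j)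

/-! The rates never vanish, so they determine `p (n, 1)` for `n ≥ 2`, and `p (1, 1) = 1` by
normalization. Solving the consistency equation for `p (i + 1, j)` expresses row `i + 1` through
row `i` and the column `p (·, 1)`, while row `1` is that column by symmetry; induction on `i`
finishes. -/

theorem rates_ne_zero {lam q : ℕ → ℝ} (hlam2 : 0 < lam 2)
    (hrate : ∀ n : ℕ, 2 ≤ n → lam (n + 1) * (1 - q n) = lam n) :
    ∀ n : ℕ, 2 ≤ n → lam n ≠ 0 := by
  intro n hn
  induction n, hn using Nat.le_induction with
  | base => exact hlam2.ne'
  | succ n hn ih =>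
    intro hzero
    apply ih
    rw [← hrate n hn, hzero, zero_mul]

namespace IsConsistentSplittingRule

variable {p p' : ℕ → ℕ → ℝ}

theorem apply_one_one (hp : IsConsistentSplittingRule p) : p 1 1 = 1 := by
  simpa using hp.2.2.1 2 le_rfl

theorem apply_succ_left (hp : IsConsistentSplittingRule p) {i j : ℕ} (hi : 1 ≤ i) (hj : 1 ≤ j) :
    p (i + 1) j = p i j - p i (j + 1) - p (i + j) 1 * p i j := by
  linarith [hp.2.2.2 i j hi hj]

theorem eq_of_apply_one_eq (hp : IsConsistentSplittingRule p)
    (hp' : IsConsistentSplittingRule p') (h : ∀ n : ℕ, 1 ≤ n → p n 1 = p' n 1) :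
    ∀ i j : ℕ, 1 ≤ i → 1 ≤ j → p i j = p' i j := by
  intro i j hi
  induction i, hi using Nat.le_induction generalizing j with
  | base =>
    intro hj
    rw [hp.2.1 1 j le_rfl hj, hp'.2.1 1 j le_rfl hj]
    exact h j hj
  | succ i hi ih =>
    intro hj
    rw [hp.apply_succ_left hi hj, hp'.apply_succ_left hi hj, ih j hj, ih (j + 1) (by omega),
      h (i + j) (by omega)]

end IsConsistentSplittingRule

/-- Proposition 6: a consistent binary splitting rule is uniquely
determined by its rate sequence `(λ_n)` satisfying `λ_{n+1}(1 - p(n,1)) = λ_n`. -/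
theorem splitting_rule_determined_by_rates
    (p p' : ℕ → ℕ → ℝ)
    (hp : IsConsistentSplittingRule p) (hp' : IsConsistentSplittingRule p')
    (lam : ℕ → ℝ) (hlam2 : 0 < lam 2)
    (hrate : ∀ n : ℕ, 2 ≤ n → lam (n + 1) * (1 - p n 1) = lam n)
    (hrate' : ∀ n : ℕ, 2 ≤ n → lam (n + 1) * (1 - p' n 1) = lam n) :
    ∀ i j : ℕ, 1 ≤ i → 1 ≤ j → p i j = p' i j := by
  have hlam := rates_ne_zero hlam2 hrate
  refine hp.eq_of_apply_one_eq hp' fun n hn => ?_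
  rcases hn.eq_or_lt with rfl | hn
  · rw [hp.apply_one_one, hp'.apply_one_one]
  · have h := mul_left_cancel₀ (hlam (n + 1) (by omega)) ((hrate n hn).trans (hrate' n hn).symm)
    linarith
end

section
/- Let p be a consistent binary splitting rule with rate sequence (λ_n)_{n≥2} satisfying λ_{n+1}(1-p(n,1)) = λ_n. Then for all 1 ≤ k ≤ n/2, λ_n · p(k, n-k) = Σ_{j=0}^{k} (-1)^{k-j+1} C(k,j) λ_{n-j} (with the convention λ_1 = 0). -/
/-!
Combining the consistency equation with the rate relation `λ_{n+1} (1 - p(n,1)) = λ_n` gives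
`λ_{k+m+1} p(k+1,m) = λ_{k+m} p(k,m) - λ_{k+m+1} p(k,m+1)`, which is the recursion
`D^{k+1}(x) = D^k(x-1) - D^k(x)` of the iterated differences `D^k` of `λ` with step `-1`.
Since `λ_{m+1} p(1,m) = λ_{m+1} - λ_m`, induction on `k` gives `λ_{k+m} p(k,m) = -D^k(k+m)`,
and the binomial expansion of `D^k` is the alternating sum.
-/

open Finset

open fwdDiff

theorem neg_fwdDiff_neg_one_iter_toNat (lam : ℕ → ℝ) {k n : ℕ} (hkn : k ≤ n) :
    -((Δ_[-1])^[k] (lam ∘ Int.toNat)) n =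
      ∑ j ∈ range (k + 1), (-1 : ℝ) ^ (k - j + 1) * (k.choose j : ℝ) * lam (n - j) := by
  rw [fwdDiff_iter_eq_sum_shift, ← sum_neg_distrib]
  refine sum_congr rfl fun j hj => ?_
  have hjn : j ≤ n := (Nat.lt_succ_iff.mp (mem_range.mp hj)).trans hkn
  have htoNat : ((n : ℤ) + (j : ℕ) • (-1 : ℤ)).toNat = n - j := by
    rw [smul_neg, nsmul_one]
    omega
  rw [Function.comp_apply, htoNat, zsmul_eq_mul, pow_succ]
  push_cast
  ring

namespace IsConsistentSplittingRule

variable {p : ℕ → ℕ → ℝ} (hp : IsConsistentSplittingRule p)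
include hp

theorem one_one : p 1 1 = 1 := by
  simpa using hp.2.2.1 2 le_rfl

variable {lam : ℕ → ℝ} (hrate : ∀ n : ℕ, 2 ≤ n → lam (n + 1) * (1 - p n 1) = lam n)
include hrate

theorem rate_mul_one_left (hlam1 : lam 1 = 0) {m : ℕ} (hm : 1 ≤ m) :
    lam (m + 1) * p 1 m = lam (m + 1) - lam m := by
  obtain rfl | hm2 := hm.eq_or_lt
  · simp [hp.one_one, hlam1]
  · have := hrate m hm2
    rw [hp.2.1 m 1 hm le_rfl] at this
    linarith

theorem rate_mul_succ_left {k m : ℕ} (hk : 1 ≤ k) (hm : 1 ≤ m) :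
    lam (k + m + 1) * p (k + 1) m = lam (k + m) * p k m - lam (k + m + 1) * p k (m + 1) := by
  linear_combination p k m * hrate (k + m) (by omega) - lam (k + m + 1) * hp.2.2.2 k m hk hm

theorem rate_mul_eq_neg_fwdDiff_iter (hlam1 : lam 1 = 0) {k m : ℕ} (hk : 1 ≤ k) (hm : 1 ≤ m) :
    lam (k + m) * p k m = -((Δ_[-1])^[k] (lam ∘ Int.toNat)) ↑(k + m) := by
  induction k, hk using Nat.le_induction generalizing m with
  | base =>
    rw [add_comm, hp.rate_mul_one_left hrate hlam1 hm, Function.iterate_one, fwdDiff]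
    simp
  | succ k hk ih =>
    have ih_succ := ih (m := m + 1) (by omega)
    rw [← add_assoc] at ih_succ
    have hshift : ((k + m + 1 : ℕ) : ℤ) + -1 = (k + m : ℕ) := by push_cast; ring
    rw [show k + 1 + m = k + m + 1 by ring, hp.rate_mul_succ_left hrate hk hm, ih hm, ih_succ,
      Function.iterate_succ_apply', fwdDiff, hshift]
    ring

end IsConsistentSplittingRule

/-- the alternating-difference formula
`λ_n p(k, n-k) = Σ_{j=0}^k (-1)^{k-j+1} C(k,j) λ_{n-j}` for `1 ≤ k ≤ n/2`,
with the convention `λ_1 = 0`. -/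
theorem rate_difference_formula
    (p : ℕ → ℕ → ℝ) (hp : IsConsistentSplittingRule p)
    (lam : ℕ → ℝ) (hlam1 : lam 1 = 0)
    (hrate : ∀ n : ℕ, 2 ≤ n → lam (n + 1) * (1 - p n 1) = lam n) :
    ∀ n k : ℕ, 2 ≤ n → 1 ≤ k → 2 * k ≤ n →
      lam n * p k (n - k) =
        ∑ j ∈ Finset.range (k + 1),
          (-1 : ℝ) ^ (k - j + 1) * (k.choose j : ℝ) * lam (n - j) := by
  intro n k _ hk hkn
  obtain ⟨m, rfl⟩ : ∃ m, n = k + m := ⟨n - k, by omega⟩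
  rw [Nat.add_sub_cancel_left, hp.rate_mul_eq_neg_fwdDiff_iter hrate hlam1 hk (by omega),
    neg_fwdDiff_neg_one_iter_toNat lam (by omega)]
end

section
/- For the beta-splitting model with parameter β > -2, the rate sequence λ_n = λ_2 Π_{j=2}^{n-1} 1/(1 - p(j,1)) satisfies λ_n = λ_2 Z(n) Γ(4+2β)/Γ(n+2+2β), where p(i,j) = w(i)w(j)/Z(i+j), w(j) = Γ(j+1+β)/Γ(2+β), and Z(n) = Σ_{k=1}^{n-1} C(n-1,k-1) w(k)w(n-k). -/
/-!
The Gamma weights satisfy `w(1) = 1` and `w(k+1) = (k+1+β) w(k)`. Splitting the binomial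
coefficients of `Z(n+1)` by Pascal's rule, reflecting one of the two resulting sums, and raising one
weight argument in each gives `Z(n+1) = (n+2+2β) Z(n) + w(n)`, that is
`1/(1 - p(n,1)) = Z(n+1) / ((n+2+2β) Z(n))`. Since `Γ(n+3+2β) = (n+2+2β) Γ(n+2+2β)`, the claimed
formula obeys the same recursion `λ_{n+1} = λ_n / (1 - p(n,1))` and agrees at `n = 2`, where
`Z(2) = 1`.
-/

open Finset

namespace GibbsSplitting

variable {R : Type*} [CommRing R]

def partitionFn (w : ℕ → R) (n : ℕ) : R :=
  ∑ k ∈ Icc 1 (n - 1), ((n - 1).choose (k - 1) : R) * w k * w (n - k)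

theorem partitionFn_succ (w : ℕ → R) (N : ℕ) :
    partitionFn w (N + 1) = ∑ i ∈ range N, (N.choose i : R) * w (i + 1) * w (N - i) := by
  rw [partitionFn, Nat.add_sub_cancel, ← Ico_add_one_right_eq_Icc, sum_Ico_eq_sum_range]
  refine sum_congr rfl fun i _ => ?_
  rw [add_comm 1 i, Nat.add_sub_cancel, Nat.add_sub_add_right]

variable {w : ℕ → R}

theorem partitionFn_add_one {c : R} (hw : ∀ k, 1 ≤ k → w (k + 1) = (k + c) * w k) {n : ℕ}
    (hn : 1 ≤ n) : partitionFn w (n + 1) = (n + 2 * c) * partitionFn w n + w 1 * w n := by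
  obtain ⟨N, rfl⟩ := Nat.exists_eq_add_of_le' hn
  rw [partitionFn_succ, partitionFn_succ]
  have reflected : ∑ i ∈ range N, (N.choose (i + 1) : R) * w (i + 1 + 1) * w (N - i) =
      ∑ i ∈ range N, (N.choose i : R) * w (i + 1) * w (N - i + 1) := by
    rw [← sum_range_reflect]
    refine sum_congr rfl fun i hi => ?_
    have hi := mem_range.mp hi
    rw [show N - 1 - i + 1 = N - i by omega, show N - (N - 1 - i) = i + 1 by omega,
      Nat.choose_symm_of_eq_add (by omega : N = N - i + i)]
    ring
  calc _ = ∑ i ∈ range N, ((N.choose i : R) * w (i + 1 + 1) * w (N - i) +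
          (N.choose (i + 1) : R) * w (i + 1 + 1) * w (N - i)) + w 1 * w (N + 1) := by
        rw [sum_range_succ']
        simp only [Nat.choose_succ_succ', Nat.cast_add, add_mul, Nat.choose_zero_right,
          Nat.cast_one, one_mul, Nat.add_sub_add_right, zero_add, Nat.sub_zero]
    _ = ∑ i ∈ range N, ((N.choose i : R) * w (i + 1 + 1) * w (N - i) +
          (N.choose i : R) * w (i + 1) * w (N - i + 1)) + w 1 * w (N + 1) := by
        rw [sum_add_distrib, sum_add_distrib, reflected]
    _ = _ := by
        rw [mul_sum]
        congr 1
        refine sum_congr rfl fun i hi => ?_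
        have hi := mem_range.mp hi
        rw [hw (i + 1) (by omega), hw (N - i) (by omega), Nat.cast_sub hi.le]
        push_cast
        ring

theorem partitionFn_pos [PartialOrder R] [IsStrictOrderedRing R] (hw : ∀ k, 1 ≤ k → 0 < w k)
    {n : ℕ} (hn : 2 ≤ n) : 0 < partitionFn w n := by
  refine sum_pos (fun k hk => ?_) ⟨1, mem_Icc.mpr ⟨le_rfl, by omega⟩⟩
  obtain ⟨hk1, hkn⟩ := mem_Icc.mp hk
  have := Nat.choose_pos (by omega : k - 1 ≤ n - 1)
  exact mul_pos (mul_pos (by exact_mod_cast this) (hw k hk1)) (hw (n - k) (by omega))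

theorem rate_add_one {M : Type*} [CommMonoid M] {lam f : ℕ → M}
    (hlam : ∀ n, 2 ≤ n → lam n = lam 2 * ∏ j ∈ Icc 2 (n - 1), f j) {n : ℕ} (hn : 2 ≤ n) :
    lam (n + 1) = lam n * f n := by
  rw [hlam (n + 1) (by omega), hlam n hn, Nat.add_sub_cancel,
    ← Nat.sub_add_cancel (by omega : 1 ≤ n), prod_Icc_succ_top (by omega),
    Nat.sub_add_cancel (by omega : 1 ≤ n), mul_assoc]

section BetaWeights

variable {β : ℝ} {w : ℕ → ℝ}

theorem betaWeight_one (hβ : -2 < β)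
    (hw : ∀ j : ℕ, 1 ≤ j → w j = Real.Gamma ((j : ℝ) + 1 + β) / Real.Gamma (2 + β)) :
    w 1 = 1 := by
  rw [hw 1 le_rfl, Nat.cast_one, one_add_one_eq_two]
  exact div_self (Real.Gamma_pos_of_pos (by linarith)).ne'

theorem betaWeight_succ (hβ : -2 < β)
    (hw : ∀ j : ℕ, 1 ≤ j → w j = Real.Gamma ((j : ℝ) + 1 + β) / Real.Gamma (2 + β))
    (k : ℕ) (hk : 1 ≤ k) : w (k + 1) = (k + (1 + β)) * w k := by
  have hk' : (1 : ℝ) ≤ k := by exact_mod_cast hk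
  rw [hw (k + 1) (by omega), hw k hk, Nat.cast_succ,
    show (k : ℝ) + 1 + 1 + β = k + 1 + β + 1 by ring, Real.Gamma_add_one (by linarith),
    mul_div_assoc, add_assoc]

theorem betaWeight_pos (hβ : -2 < β)
    (hw : ∀ j : ℕ, 1 ≤ j → w j = Real.Gamma ((j : ℝ) + 1 + β) / Real.Gamma (2 + β))
    (k : ℕ) (hk : 1 ≤ k) : 0 < w k := by
  have hk' : (1 : ℝ) ≤ k := by exact_mod_cast hk
  rw [hw k hk]
  exact div_pos (Real.Gamma_pos_of_pos (by linarith)) (Real.Gamma_pos_of_pos (by linarith))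

end BetaWeights

end GibbsSplitting

open GibbsSplitting

/-- for the beta-splitting model with parameter `β > -2`, the rate
sequence `λ_n = λ_2 ∏_{j=2}^{n-1} 1/(1 - p(j,1))` equals
`λ_2 Z(n) Γ(4+2β)/Γ(n+2+2β)`. -/
theorem beta_splitting_rate_sequence
    (β : ℝ) (hβ : β > -2)
    (w : ℕ → ℝ)
    (hw : ∀ j : ℕ, 1 ≤ j → w j = Real.Gamma ((j : ℝ) + 1 + β) / Real.Gamma (2 + β))
    (Z : ℕ → ℝ)
    (hZ : ∀ n : ℕ, 2 ≤ n →
      Z n = ∑ k ∈ Finset.Icc 1 (n - 1), ((n - 1).choose (k - 1) : ℝ) * w k * w (n - k))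
    (p : ℕ → ℕ → ℝ)
    (hp : ∀ i j : ℕ, 1 ≤ i → 1 ≤ j → p i j = w i * w j / Z (i + j))
    (lam : ℕ → ℝ)
    (hlam : ∀ n : ℕ, 2 ≤ n →
      lam n = lam 2 * ∏ j ∈ Finset.Icc 2 (n - 1), 1 / (1 - p j 1)) :
    ∀ n : ℕ, 2 ≤ n →
      lam n = lam 2 * Z n * Real.Gamma (4 + 2 * β) / Real.Gamma ((n : ℝ) + 2 + 2 * β) := by
  have hw1 := betaWeight_one hβ hw
  have hZ' : ∀ n, 2 ≤ n → Z n = partitionFn w n := hZ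
  have hZpos (n : ℕ) (hn : 2 ≤ n) : 0 < Z n :=
    hZ' n hn ▸ partitionFn_pos (betaWeight_pos hβ hw) hn
  have hZsucc (n : ℕ) (hn : 2 ≤ n) : Z (n + 1) = (n + 2 + 2 * β) * Z n + w n := by
    rw [hZ' (n + 1) (by omega), hZ' n hn, partitionFn_add_one (betaWeight_succ hβ hw) (by omega),
      hw1]
    ring
  intro n hn
  induction n, hn using Nat.le_induction with
  | base =>
    have hZ2 : Z 2 = 1 := by simp [hZ 2 le_rfl, hw1]
    have hG : Real.Gamma (4 + 2 * β) ≠ 0 := (Real.Gamma_pos_of_pos (by linarith)).ne'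
    rw [hZ2, Nat.cast_ofNat, show (2 : ℝ) + 2 + 2 * β = 4 + 2 * β by ring, mul_one,
      mul_div_cancel_right₀ _ hG]
  | succ n hn ih =>
    have hn' : (2 : ℝ) ≤ n := by exact_mod_cast hn
    have hZn := (hZpos n hn).ne'
    have hZn1 := (hZpos (n + 1) (by omega)).ne'
    have hpn : 1 - p n 1 = (n + 2 + 2 * β) * Z n / Z (n + 1) := by
      rw [hp n 1 (by omega) le_rfl, hw1, mul_one, eq_div_iff hZn1, sub_mul,
        div_mul_cancel₀ _ hZn1, hZsucc n hn]
      ring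
    rw [rate_add_one hlam hn, ih, hpn, Nat.cast_succ,
      show (n : ℝ) + 1 + 2 + 2 * β = n + 2 + 2 * β + 1 by ring, Real.Gamma_add_one (by linarith)]
    field_simp
end

section
/- For the Yule model (β = 0, w(n) = n!), the rate sequence with λ_2 = 1 is λ_n = (3n-3)/(n+1), and Z(n) = (n-1)·n!/2. -/
/-!
Since `C(n-1, k-1) k! (n-k)! = k (n-1)!`, the normalizer is `(n-1)! (1 + ⋯ + (n-1)) = (n-1) n!/2`.
Hence `p(n,1) = 2/(n(n+1))` and `1 - p(n,1) = (n-1)(n+2)/(n(n+1))`, so the recurrence reads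
`λ_{n+1} = λ_n · n(n+1)/((n-1)(n+2))`, which `(3n-3)/(n+1)` satisfies, starting from `λ_2 = 1`.
-/

open Finset Nat

theorem sum_Icc_id_mul_two (m : ℕ) : (∑ k ∈ Icc 1 m, k) * 2 = (m + 1) * m := by
  have h := sum_range_id_mul_two (m + 1)
  rwa [add_tsub_cancel_right, range_eq_Ico, sum_eq_sum_Ico_succ_bot m.succ_pos, zero_add,
    zero_add, succ_eq_add_one, Ico_add_one_right_eq_Icc] at h

theorem choose_pred_mul_factorial_mul_factorial {n k : ℕ} (hk : 1 ≤ k) (hkn : k ≤ n) :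
    (n - 1).choose (k - 1) * k ! * (n - k)! = k * (n - 1)! := by
  obtain ⟨j, rfl⟩ : ∃ j, k = j + 1 := ⟨k - 1, by omega⟩
  rw [add_tsub_cancel_right, factorial_succ, show n - (j + 1) = n - 1 - j by omega,
    ← choose_mul_factorial_mul_factorial (show j ≤ n - 1 by omega)]
  ring

theorem sum_choose_pred_mul_factorial_mul_factorial_mul_two (n : ℕ) :
    (∑ k ∈ Icc 1 (n - 1), (n - 1).choose (k - 1) * k ! * (n - k)!) * 2 = (n - 1) * n ! := by
  cases n with
  | zero => rfl
  | succ m =>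
    have hterm : ∀ k ∈ Icc 1 m, m.choose (k - 1) * k ! * (m + 1 - k)! = k * m ! := fun k hk =>
      choose_pred_mul_factorial_mul_factorial (mem_Icc.1 hk).1 (le_succ_of_le (mem_Icc.1 hk).2)
    rw [add_tsub_cancel_right, sum_congr rfl hterm, ← sum_mul, mul_right_comm,
      sum_Icc_id_mul_two, factorial_succ]
    ring

theorem sum_choose_pred_mul_factorial_mul_factorial_real {n : ℕ} (hn : 1 ≤ n) :
    ∑ k ∈ Icc 1 (n - 1), ((n - 1).choose (k - 1) : ℝ) * (k ! : ℝ) * ((n - k)! : ℝ) =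
      ((n : ℝ) - 1) * (n ! : ℝ) / 2 := by
  have hpred : ((n - 1 : ℕ) : ℝ) = n - 1 := by rw [cast_sub hn, cast_one]
  rw [eq_div_iff two_ne_zero, ← hpred]
  exact_mod_cast sum_choose_pred_mul_factorial_mul_factorial_mul_two n

theorem yule_rate_eq_of_recurrence (lam : ℕ → ℝ) (hlam2 : lam 2 = 1)
    (hrate : ∀ n : ℕ, 2 ≤ n → lam (n + 1) * (1 - 2 / ((n : ℝ) * (n + 1))) = lam n) :
    ∀ n : ℕ, 2 ≤ n → lam n = (3 * (n : ℝ) - 3) / ((n : ℝ) + 1) := by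
  intro n hn
  induction n, hn using le_induction with
  | base => rw [hlam2]; norm_num
  | succ n hn ih =>
    have hn' : (2 : ℝ) ≤ n := by exact_mod_cast hn
    have hn1 : (n : ℝ) - 1 ≠ 0 := by linarith
    have hfactor : 1 - 2 / ((n : ℝ) * (n + 1)) = (n - 1) * (n + 2) / (n * (n + 1)) := by
      field_simp
      ring
    have h := hrate n hn
    rw [ih, hfactor, ← eq_div_iff (by positivity)] at h
    rw [h]
    push_cast
    field_simp
    ring

/-- for the Yule model (β = 0, `w n = n!`), `Z n = (n-1)·n!/2` and
the rate sequence with `λ_2 = 1` is `λ_n = (3n-3)/(n+1)`. -/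
theorem yule_model_rates
    (Z : ℕ → ℝ)
    (hZ : ∀ n : ℕ, 2 ≤ n →
      Z n = ∑ k ∈ Finset.Icc 1 (n - 1),
        ((n - 1).choose (k - 1) : ℝ) * (k.factorial : ℝ) * ((n - k).factorial : ℝ))
    (p : ℕ → ℕ → ℝ)
    (hp : ∀ i j : ℕ, 1 ≤ i → 1 ≤ j →
      p i j = (i.factorial : ℝ) * (j.factorial : ℝ) / Z (i + j))
    (lam : ℕ → ℝ) (hlam2 : lam 2 = 1)
    (hrate : ∀ n : ℕ, 2 ≤ n → lam (n + 1) * (1 - p n 1) = lam n) :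
    ∀ n : ℕ, 2 ≤ n →
      Z n = ((n : ℝ) - 1) * (n.factorial : ℝ) / 2 ∧
      lam n = (3 * (n : ℝ) - 3) / ((n : ℝ) + 1) := by
  have hZ' : ∀ n : ℕ, 2 ≤ n → Z n = ((n : ℝ) - 1) * (n ! : ℝ) / 2 := fun n hn =>
    (hZ n hn).trans (sum_choose_pred_mul_factorial_mul_factorial_real (by omega))
  have hp1 : ∀ n : ℕ, 2 ≤ n → p n 1 = 2 / ((n : ℝ) * (n + 1)) := by
    intro n hn
    have hn0 : (n : ℝ) ≠ 0 := by exact_mod_cast (show n ≠ 0 by omega)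
    rw [hp n 1 (by omega) le_rfl, hZ' (n + 1) (by omega), factorial_one, factorial_succ n]
    push_cast
    rw [add_sub_cancel_right]
    field_simp
  have hlam := yule_rate_eq_of_recurrence lam hlam2 fun n hn => hp1 n hn ▸ hrate n hn
  exact fun n hn => ⟨hZ' n hn, hlam n hn⟩
end

section
/- For the β = -1 beta-splitting model with w(n) = (n-1)!, the normalization satisfies Z(n) = Σ_{k=1}^{n-1} C(n-1,k-1)(k-1)!(n-k-1)! = (n-1)! Σ_{j=1}^{n-1} 1/j, and the rate sequence with λ_2 = 1 is λ_n = Σ_{j=1}^{n-1} 1/j (harmonic numbers). -/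
/-!
The `k`-th term of `Z n` is `(n-1)! / (n-k)`, so reflecting the summation index gives
`Z n = (n-1)! H_{n-1}`. Hence `p n 1 = 1 / (n H_n)` and `1 - p n 1 = H_{n-1} / H_n`, and the rate
recursion `λ_{n+1} H_{n-1} / H_n = λ_n` is solved by `λ_n = H_{n-1}` starting from `λ_2 = H_1 = 1`.
-/

open Finset

open scoped Nat

theorem sum_Icc_one_div_eq_harmonic (m : ℕ) :
    ∑ j ∈ Icc 1 m, (1 : ℝ) / j = harmonic m := by
  simp [harmonic_eq_sum_Icc]

theorem choose_mul_factorial_mul_factorial_eq_div {m k : ℕ} (hk : k ∈ Icc 1 m) :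
    (m.choose (k - 1) : ℝ) * (k - 1)! * (m - k)! = m ! / (m + 1 - k : ℕ) := by
  obtain ⟨hk1, hkm⟩ := mem_Icc.mp hk
  have h := Nat.choose_mul_factorial_mul_factorial (show k - 1 ≤ m by omega)
  rw [show m - (k - 1) = m - k + 1 by omega, Nat.factorial_succ] at h
  rw [eq_div_iff (by norm_cast; omega), show m + 1 - k = m - k + 1 by omega]
  exact_mod_cast (by rw [← h]; ring)

theorem sum_choose_mul_factorial_mul_factorial (m : ℕ) :
    ∑ k ∈ Icc 1 m, (m.choose (k - 1) : ℝ) * (k - 1)! * (m - k)! = m ! * harmonic m := by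
  have reflect := sum_Ico_reflect (fun j => (m ! : ℝ) / j) 1 (n := m + 1) (Nat.le_succ _)
  simp only [Nat.add_sub_cancel, show m + 1 + 1 - (m + 1) = 1 by omega,
    Ico_add_one_right_eq_Icc] at reflect
  rw [sum_congr rfl fun k hk => choose_mul_factorial_mul_factorial_eq_div hk, reflect,
    harmonic_eq_sum_Icc]
  simp [mul_sum, div_eq_mul_inv]

theorem one_sub_factorial_div_factorial_mul_harmonic (m : ℕ) :
    1 - (m ! : ℝ) / ((m + 1)! * harmonic (m + 1)) = harmonic m / harmonic (m + 1) := by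
  have hm : (0 : ℝ) ≤ harmonic m := by simp only [harmonic_eq_sum_Icc]; positivity
  have hpos : (0 : ℝ) < (m + 1) * harmonic m + 1 := by positivity
  rw [Nat.factorial_succ, harmonic_succ m]
  push_cast
  field_simp
  ring

theorem eq_harmonic_of_mul_harmonic_div_harmonic (lam : ℕ → ℝ) (h2 : lam 2 = 1)
    (hrec : ∀ m, 1 ≤ m → lam (m + 2) * (harmonic m / harmonic (m + 1)) = lam (m + 1)) :
    ∀ m, 1 ≤ m → lam (m + 1) = harmonic m := by
  intro m hm
  induction m, hm using Nat.le_induction with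
  | base => simpa using h2
  | succ m hm ih =>
    have hpos : (0 : ℚ) < harmonic m := harmonic_pos (by omega)
    have hpos' : (0 : ℚ) < harmonic (m + 1) := harmonic_pos (by omega)
    have h := hrec m hm
    rw [ih] at h
    field_simp at h
    simpa using h

/-- for the β = -1 model (`w n = (n-1)!`),
`Z n = (n-1)! Σ_{j=1}^{n-1} 1/j` and the rate sequence with `λ_2 = 1` is the
harmonic number `λ_n = Σ_{j=1}^{n-1} 1/j`. -/
theorem beta_minus_one_model_rates
    (Z : ℕ → ℝ)
    (hZ : ∀ n : ℕ, 2 ≤ n →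
      Z n = ∑ k ∈ Finset.Icc 1 (n - 1),
        ((n - 1).choose (k - 1) : ℝ) * ((k - 1).factorial : ℝ) * ((n - k - 1).factorial : ℝ))
    (p : ℕ → ℕ → ℝ)
    (hp : ∀ i j : ℕ, 1 ≤ i → 1 ≤ j →
      p i j = ((i - 1).factorial : ℝ) * ((j - 1).factorial : ℝ) / Z (i + j))
    (lam : ℕ → ℝ) (hlam2 : lam 2 = 1)
    (hrate : ∀ n : ℕ, 2 ≤ n → lam (n + 1) * (1 - p n 1) = lam n) :
    ∀ n : ℕ, 2 ≤ n →
      Z n = (((n : ℕ) - 1).factorial : ℝ) * ∑ j ∈ Finset.Icc 1 (n - 1), (1 : ℝ) / (j : ℝ) ∧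
      lam n = ∑ j ∈ Finset.Icc 1 (n - 1), (1 : ℝ) / (j : ℝ) := by
  have hZ' : ∀ m, 1 ≤ m → Z (m + 1) = m ! * harmonic m := fun m hm => by
    simp_rw [hZ (m + 1) (by omega), Nat.add_sub_cancel, Nat.sub_right_comm (m + 1) _ 1,
      Nat.add_sub_cancel, sum_choose_mul_factorial_mul_factorial]
  have hlam : ∀ m, 1 ≤ m → lam (m + 1) = harmonic m :=
    eq_harmonic_of_mul_harmonic_div_harmonic lam hlam2 fun m hm => by
      rw [← hrate (m + 1) (by omega), hp (m + 1) 1 (by omega) le_rfl, hZ' (m + 1) (by omega), Nat.add_sub_cancel,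
        ← one_sub_factorial_div_factorial_mul_harmonic]
      simp
  intro n hn
  obtain ⟨m, rfl⟩ : ∃ m, n = m + 1 := ⟨n - 1, by omega⟩
  simp only [Nat.add_sub_cancel, sum_Icc_one_div_eq_harmonic]
  exact ⟨hZ' m (by omega), hlam m (by omega)⟩
end

section
/- Suppose a multifurcating Gibbs splitting rule p(n₁,...,n_k) = (a(k)/c(n)) Π_i w(n_i) with w(1)=1, a(2)=1, w(j)>0, is consistent, i.e., satisfies the consistency relation p(n₁,...,n_k) = Σ_i p(n₁,...,n_i+1,...,n_k) + p(n₁,...,n_k,1) + p(n₁+...+n_k,1)·p(n₁,...,n_k). Then there exist α < 1 and b > 0 such that (after rescaling) w(j+1)/w(j) = j - α for all j, i.e., w(j) = Γ(j-α)/Γ(1-α) up to geometric factors, or w(j+1)/w(j) is constant. -/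
/-!
Specialised to splits into two blocks, consistency of a Gibbs rule says that
`w(n₁+1)/w(n₁) + w(n₂+1)/w(n₂)` depends only on `n₁ + n₂`. A sequence with this property is
an arithmetic progression, its common difference is nonnegative because the ratios are
positive, and a positive progression `W j = W 1 + (j - 1) d` is either constant (`d = 0`) or
equal to `d (j - α)` with `α = 1 - W 1 / d < 1`.
-/

theorem eq_add_mul_of_add_eq_comp_add (f F : ℕ → ℝ)
    (h : ∀ i j : ℕ, 1 ≤ i → 1 ≤ j → f i + f j = F (i + j)) (j : ℕ) (hj : 1 ≤ j) :
    f j = f 1 + ((j : ℝ) - 1) * (f 2 - f 1) := by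
  induction j, hj using Nat.le_induction with
  | base => simp
  | succ n hn ih =>
    have step : f (n + 1) - f n = f 2 - f 1 := by
      linarith [h (n + 1) 1 (by omega) le_rfl, h n 2 hn (by omega)]
    push_cast
    linarith

theorem nonneg_of_forall_add_mul_pos {x d : ℝ} (h : ∀ n : ℕ, 0 < x + n * d) : 0 ≤ d := by
  by_contra! hd
  obtain ⟨n, hn⟩ := exists_nat_gt (x / -d)
  have := h n
  rw [div_lt_iff₀ (neg_pos.mpr hd)] at hn
  linarith

section GibbsConsistency

variable {w a c : ℕ → ℝ} {p : List ℕ → ℝ}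

theorem gibbs_pair
    (hp : ∀ ns : List ℕ, 2 ≤ ns.length → (∀ x ∈ ns, 1 ≤ x) →
      p ns = a ns.length / c ns.sum * (ns.map w).prod)
    (ha2 : a 2 = 1) {m₁ m₂ : ℕ} (h₁ : 1 ≤ m₁) (h₂ : 1 ≤ m₂) :
    p [m₁, m₂] = w m₁ * w m₂ / c (m₁ + m₂) := by
  rw [hp [m₁, m₂] (by simp) (by simp [h₁, h₂])]
  simp [ha2]
  ring

theorem gibbs_triple_one
    (hp : ∀ ns : List ℕ, 2 ≤ ns.length → (∀ x ∈ ns, 1 ≤ x) →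
      p ns = a ns.length / c ns.sum * (ns.map w).prod)
    (hw1 : w 1 = 1) {m₁ m₂ : ℕ} (h₁ : 1 ≤ m₁) (h₂ : 1 ≤ m₂) :
    p [m₁, m₂, 1] = a 3 * w m₁ * w m₂ / c (m₁ + m₂ + 1) := by
  rw [hp [m₁, m₂, 1] (by simp) (by simp [h₁, h₂])]
  simp [hw1, add_assoc]
  ring

theorem gibbs_ratio_add_ratio
    (hp : ∀ ns : List ℕ, 2 ≤ ns.length → (∀ x ∈ ns, 1 ≤ x) →
      p ns = a ns.length / c ns.sum * (ns.map w).prod)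
    (hw : ∀ j : ℕ, 1 ≤ j → 0 < w j) (hw1 : w 1 = 1)
    (ha2 : a 2 = 1) (hc : ∀ n : ℕ, 2 ≤ n → 0 < c n)
    (hcons : ∀ ns : List ℕ, 2 ≤ ns.length → (∀ x ∈ ns, 1 ≤ x) →
      p ns = (∑ i ∈ Finset.range ns.length, p (ns.set i (ns.getD i 0 + 1))) +
        p (ns ++ [1]) + p [ns.sum, 1] * p ns)
    {n₁ n₂ : ℕ} (h₁ : 1 ≤ n₁) (h₂ : 1 ≤ n₂) :
    w (n₁ + 1) / w n₁ + w (n₂ + 1) / w n₂ =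
      c (n₁ + n₂ + 1) / c (n₁ + n₂) - a 3 - w (n₁ + n₂) / c (n₁ + n₂) := by
  have hcons₂ := hcons [n₁, n₂] (by simp) (by simp [h₁, h₂])
  simp only [List.length_cons, List.length_nil, Finset.sum_range_succ, Finset.range_zero,
    Finset.sum_empty, List.getD_cons_zero, List.getD_cons_succ, List.set_cons_zero,
    List.set_cons_succ, List.cons_append, List.nil_append, List.sum_cons,
    List.sum_nil, add_zero, zero_add] at hcons₂
  rw [gibbs_pair hp ha2 h₁ h₂, gibbs_pair hp ha2 (by omega) h₂, gibbs_pair hp ha2 h₁ (by omega),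
    gibbs_triple_one hp hw1 h₁ h₂, gibbs_pair hp ha2 (by omega) le_rfl, hw1,
    show n₁ + 1 + n₂ = n₁ + n₂ + 1 by omega, show n₁ + (n₂ + 1) = n₁ + n₂ + 1 by omega] at hcons₂
  have := hw n₁ h₁
  have := hw n₂ h₂
  have := hc (n₁ + n₂) (by omega)
  have := hc (n₁ + n₂ + 1) (by omega)
  field_simp at hcons₂ ⊢
  linear_combination -hcons₂

end GibbsConsistency

theorem multifurcating_gibbs_weights_general
    (w a c : ℕ → ℝ)
    (hw : ∀ j : ℕ, 1 ≤ j → 0 < w j) (hw1 : w 1 = 1)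
    (ha2 : a 2 = 1)
    (hc : ∀ n : ℕ, 2 ≤ n → 0 < c n)
    (p : List ℕ → ℝ)
    (hp : ∀ ns : List ℕ, 2 ≤ ns.length → (∀ x ∈ ns, 1 ≤ x) →
      p ns = a ns.length / c ns.sum * (ns.map w).prod)
    (hcons : ∀ ns : List ℕ, 2 ≤ ns.length → (∀ x ∈ ns, 1 ≤ x) →
      p ns = (∑ i ∈ Finset.range ns.length, p (ns.set i (ns.getD i 0 + 1))) +
        p (ns ++ [1]) + p [ns.sum, 1] * p ns) :
    (∃ α b : ℝ, α < 1 ∧ 0 < b ∧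
        ∀ j : ℕ, 1 ≤ j → w (j + 1) / w j = b * ((j : ℝ) - α)) ∨
      (∃ r : ℝ, 0 < r ∧ ∀ j : ℕ, 1 ≤ j → w (j + 1) / w j = r) := by
  set W : ℕ → ℝ := fun j => w (j + 1) / w j
  set d := W 2 - W 1
  have hW_pos (j : ℕ) (hj : 1 ≤ j) : 0 < W j := div_pos (hw (j + 1) (by omega)) (hw j hj)
  have hW_arith : ∀ j : ℕ, 1 ≤ j → W j = W 1 + ((j : ℝ) - 1) * d :=
    eq_add_mul_of_add_eq_comp_add W (fun n => c (n + 1) / c n - a 3 - w n / c n) fun i j hi hj =>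
      gibbs_ratio_add_ratio hp hw hw1 ha2 hc hcons hi hj
  have hd : 0 ≤ d := nonneg_of_forall_add_mul_pos (x := W 1) fun n => by
    simpa [hW_arith (n + 1) (by omega)] using hW_pos (n + 1) (by omega)
  rcases hd.lt_or_eq with hd | hd
  · refine .inl ⟨1 - W 1 / d, d, ?_, hd, fun j hj => ?_⟩
    · linarith [div_pos (hW_pos 1 le_rfl) hd]
    · rw [show w (j + 1) / w j = W j from rfl, hW_arith j hj]
      field_simp
      ring
  · exact .inr ⟨W 1, hW_pos 1 le_rfl, fun j hj => by simpa [← hd] using hW_arith j hj⟩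

/-- part of Theorem 8: a consistent multifurcating Gibbs splitting
rule `p(n₁,…,n_k) = (a k / c n) ∏ᵢ w nᵢ` has weight ratios `w(j+1)/w(j)`
affine of the form `b (j - α)` with `α < 1`, `b > 0`, or constant. -/
theorem multifurcating_gibbs_weights
    (w a c : ℕ → ℝ)
    (hw : ∀ j : ℕ, 1 ≤ j → 0 < w j) (hw1 : w 1 = 1)
    (ha2 : a 2 = 1) (ha : ∀ k : ℕ, 2 ≤ k → 0 ≤ a k)
    (hc : ∀ n : ℕ, 2 ≤ n → 0 < c n)
    (p : List ℕ → ℝ)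
    (hp : ∀ ns : List ℕ, 2 ≤ ns.length → (∀ x ∈ ns, 1 ≤ x) →
      p ns = a ns.length / c ns.sum * (ns.map w).prod)
    (hcons : ∀ ns : List ℕ, 2 ≤ ns.length → (∀ x ∈ ns, 1 ≤ x) →
      p ns = (∑ i ∈ Finset.range ns.length, p (ns.set i (ns.getD i 0 + 1))) +
        p (ns ++ [1]) + p [ns.sum, 1] * p ns) :
    (∃ α b : ℝ, α < 1 ∧ 0 < b ∧
        ∀ j : ℕ, 1 ≤ j → w (j + 1) / w j = b * ((j : ℝ) - α)) ∨
      (∃ r : ℝ, 0 < r ∧ ∀ j : ℕ, 1 ≤ j → w (j + 1) / w j = r) :=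
  multifurcating_gibbs_weights_general w a c hw hw1 ha2 hc p hp hcons
end
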